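/- arXiv:1301.7597 — 5 statements merged into one kernel-verified Lean document; each statement's English description precedes it below -/
import Mathlib

section
/- Let G be a graph, M a maximum matching of G, and S the set of vertices exposed by M. A vertex u belongs to D(G) (the set of vertices missed by some maximum matching) if and only if there exists v ∈ S such that there is an M-balanced path from u to v (i.e., an M-alternating path with an even number of edges starting at u in which M ∩ E(P) is a near-perfect matching of P exposing only v). -/
open SimpleGraph

variable {V : Type*}

/-- `M` is a matching of `G`, given as a set of edges. -/
def IsMatchingSet (G : SimpleGraph V) (M : Set (Sym2 V)) : Prop :=
  M ⊆ G.edgeSet ∧ ∀ (v : V), ∀ e ∈ M, ∀ f ∈ M, v ∈ e → v ∈ f → e = f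

/-- `M` is a perfect matching of `G`: every vertex lies on exactly one edge of `M`. -/
def IsPerfectMatchingSet (G : SimpleGraph V) (M : Set (Sym2 V)) : Prop :=
  M ⊆ G.edgeSet ∧ ∀ v : V, ∃! e, e ∈ M ∧ v ∈ e

/-- `M` is a maximum matching of `G`. -/
def IsMaximumMatchingSet (G : SimpleGraph V) (M : Set (Sym2 V)) : Prop :=
  IsMatchingSet G M ∧ ∀ M', IsMatchingSet G M' → M'.ncard ≤ M.ncard

/-- `v` is exposed by the matching `M`. -/
def ExposedBy (M : Set (Sym2 V)) (v : V) : Prop := ∀ e ∈ M, v ∉ e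

/-- The Gallai–Edmonds set `D(G)`: vertices missed by some maximum matching. -/
def Dset (G : SimpleGraph V) : Set V :=
  {v | ∃ M, IsMaximumMatchingSet G M ∧ ExposedBy M v}

/-- `A(G) = Γ_G(D(G))`, the neighbors of `D(G)` outside `D(G)`. -/
def Aset (G : SimpleGraph V) : Set V :=
  {v | v ∉ Dset G ∧ ∃ u ∈ Dset G, G.Adj u v}

/-- `C(G) = V(G) \ (D(G) ∪ A(G))`. -/
def Cset (G : SimpleGraph V) : Set V :=
  {v | v ∉ Dset G ∧ v ∉ Aset G}

/-- A graph is factorizable if it has a perfect matching. -/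
def Factorizable (G : SimpleGraph V) : Prop := ∃ M, IsPerfectMatchingSet G M

/-- A walk is `M`-alternating if its edges alternate between `M` and its complement. -/
def IsAltWalk {G : SimpleGraph V} {u v : V} (M : Set (Sym2 V)) (p : G.Walk u v) : Prop :=
  List.Chain' (fun e f => e ∈ M ↔ f ∉ M) p.edges

/-- An `M`-balanced path from `u` to `v`: an even `M`-alternating path whose matching
edges form a near-perfect matching of the path exposing only `v` (first edge is in `M`). -/
def IsBalancedPath {G : SimpleGraph V} {u v : V} (M : Set (Sym2 V)) (p : G.Walk u v) : Prop :=
  p.IsPath ∧ Even p.length ∧ IsAltWalk M p ∧ ∀ e, p.edges.head? = some e → e ∈ M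

/-- An `M`-saturated path: odd `M`-alternating, matching edges perfectly cover the path. -/
def IsSaturatedPath {G : SimpleGraph V} {u v : V} (M : Set (Sym2 V)) (p : G.Walk u v) : Prop :=
  p.IsPath ∧ Odd p.length ∧ IsAltWalk M p ∧ ∀ e, p.edges.head? = some e → e ∈ M

/-- An `M`-exposed path: odd `M`-alternating, non-matching edges perfectly cover the path. -/
def IsExposedPath {G : SimpleGraph V} {u v : V} (M : Set (Sym2 V)) (p : G.Walk u v) : Prop :=
  p.IsPath ∧ Odd p.length ∧ IsAltWalk M p ∧ ∀ e, p.edges.head? = some e → e ∉ M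

/-- The allowed edges of `G`: edges lying in some perfect matching. -/
def allowedEdges (G : SimpleGraph V) : Set (Sym2 V) :=
  {e | ∃ M, IsPerfectMatchingSet G M ∧ e ∈ M}

/-- `u` and `v` lie in the same factor-connected component of `G`. -/
def SameFC (G : SimpleGraph V) (u v : V) : Prop :=
  (SimpleGraph.fromEdgeSet (allowedEdges G)).Reachable u v

/-- `X` is separating: every factor-connected component lies inside `X` or misses `X`. -/
def IsSeparating (G : SimpleGraph V) (X : Set V) : Prop :=
  ∀ u v : V, SameFC G u v → (u ∈ X ↔ v ∈ X)

/-- A factorizable graph `G` is saturated if adding any non-edge strictly increases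
the number of perfect matchings. -/
def Saturated (G : SimpleGraph V) : Prop :=
  Factorizable G ∧ ∀ x y : V, x ≠ y → ¬ G.Adj x y →
    {N | IsPerfectMatchingSet G N}.ncard <
      {N | IsPerfectMatchingSet (G ⊔ SimpleGraph.fromEdgeSet {s(x, y)}) N}.ncard

/-!
If a balanced path `P` from `u` ends at an `M`-exposed vertex, then `M ∆ E(P)` is a matching
of the same size exposing `u`. Conversely, let a maximum matching `N` expose `u`. If `M` matches
`u` to `x`, then `N` matches `x` to some `y` (otherwise `N + ux` is larger), and exchanging `xy`
for `ux` in `N` gives a maximum matching exposing `y` with fewer edges outside `M`. By induction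
on `|N \ M|` there is a balanced path from `y` whose non-`M` edges lie in `N`; it avoids `u`
(exposed by `N`) and hence `x` (the `M`-partner of `u`), so prepending `u x y` gives the path.
-/

theorem symmDiff_insert_insert {α : Type*} {M E : Set α} {a b : α} (ha : a ∈ M) (hb : b ∉ M)
    (haE : a ∉ E) (hbE : b ∉ E) :
    symmDiff M (insert a (insert b E)) = insert b (symmDiff M E \ {a}) := by
  ext e
  simp only [Set.mem_symmDiff, Set.mem_insert_iff, Set.mem_sdiff, Set.mem_singleton_iff]
  have hab : a ≠ b := fun h => hb (h ▸ ha)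
  by_cases hea : e = a
  · subst hea; simp [ha, haE, hab]
  by_cases heb : e = b
  · subst heb; simp [hb, hbE, hab.symm]
  simp [hea, heb]

namespace IsMatchingSet

variable {G : SimpleGraph V} {M : Set (Sym2 V)}

theorem exposedBy_diff_singleton (hM : IsMatchingSet G M) {e : Sym2 V} (he : e ∈ M) {w : V}
    (hw : w ∈ e) : ExposedBy (M \ {e}) w :=
  fun f hf hwf => hf.2 (hM.2 w f hf.1 e he hwf hw)

theorem insert_of_exposedBy (hM : IsMatchingSet G M) {a b : V} (hab : G.Adj a b)
    (ha : ExposedBy M a) (hb : ExposedBy M b) : IsMatchingSet G (insert s(a, b) M) := by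
  have hnew : ∀ w ∈ s(a, b), ∀ f ∈ M, w ∉ f := by
    rintro w hw f hf
    rcases Sym2.mem_iff.mp hw with rfl | rfl
    exacts [ha f hf, hb f hf]
  refine ⟨Set.insert_subset hab hM.1, ?_⟩
  rintro w e (rfl | he) f (rfl | hf) hwe hwf
  · rfl
  · exact absurd hwf (hnew w hwe f hf)
  · exact absurd hwe (hnew w hwf e he)
  · exact hM.2 w e he f hf hwe hwf

theorem exchange (hM : IsMatchingSet G M) {e : Sym2 V} (he : e ∈ M) {a b : V} (hb : b ∈ e)
    (hab : G.Adj a b) (ha : ExposedBy M a) :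
    IsMatchingSet G (insert s(a, b) (M \ {e})) ∧
      (insert s(a, b) (M \ {e})).encard = M.encard := by
  have hdiff : IsMatchingSet G (M \ {e}) :=
    ⟨Set.sdiff_subset.trans hM.1, fun w f hf g hg => hM.2 w f hf.1 g hg.1⟩
  refine ⟨hdiff.insert_of_exposedBy hab (fun f hf => ha f hf.1)
    (hM.exposedBy_diff_singleton he hb), ?_⟩
  have hab_notMem : s(a, b) ∉ M \ {e} := fun h => ha _ h.1 (Sym2.mem_mk_left a b)
  rw [Set.encard_insert_of_notMem hab_notMem, Set.encard_sdiff_singleton_add_one he]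

end IsMatchingSet

namespace IsMaximumMatchingSet

variable {G : SimpleGraph V} {M : Set (Sym2 V)}

theorem of_encard_eq (hM : IsMaximumMatchingSet G M) {M' : Set (Sym2 V)}
    (hM' : IsMatchingSet G M') (hcard : M'.encard = M.encard) :
    IsMaximumMatchingSet G M' :=
  ⟨hM', fun N hN => (hM.2 N hN).trans_eq (by rw [Set.ncard_def, Set.ncard_def, hcard])⟩

theorem not_exposedBy_of_adj [Finite V] (hM : IsMaximumMatchingSet G M) {a b : V}
    (hab : G.Adj a b) (ha : ExposedBy M a) : ¬ ExposedBy M b := by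
  intro hb
  have hlarger := hM.2 _ (hM.1.insert_of_exposedBy hab ha hb)
  rw [Set.ncard_insert_of_notMem (fun h => ha _ h (Sym2.mem_mk_left a b))] at hlarger
  omega

end IsMaximumMatchingSet

section BalancedPath

variable {G : SimpleGraph V} {M : Set (Sym2 V)}

theorem isBalancedPath_nil {u : V} : IsBalancedPath M (Walk.nil : G.Walk u u) :=
  ⟨Walk.IsPath.nil, by simp, List.isChain_nil, by simp⟩

theorem not_isBalancedPath_cons_nil {u v : V} {h : G.Adj u v} :
    ¬ IsBalancedPath M (Walk.cons h Walk.nil) := by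
  simp [IsBalancedPath]

theorem isBalancedPath_cons_cons_iff {u w₁ w₂ v : V} {h₁ : G.Adj u w₁}
    {h₂ : G.Adj w₁ w₂} {q : G.Walk w₂ v} :
    IsBalancedPath M (Walk.cons h₁ (Walk.cons h₂ q)) ↔
      IsBalancedPath M q ∧ s(u, w₁) ∈ M ∧ s(w₁, w₂) ∉ M ∧
        w₁ ∉ q.support ∧ u ∉ (Walk.cons h₂ q).support := by
  simp only [IsBalancedPath, IsAltWalk, List.Chain', Walk.cons_isPath_iff,
    Walk.length_cons, Walk.edges_cons, List.isChain_cons_cons,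
    List.isChain_cons (l := q.edges), List.head?_cons, Option.some.injEq, forall_eq',
    Nat.even_add_one, not_not]
  constructor
  · rintro ⟨⟨⟨hq, hw₁⟩, hu⟩, heven, ⟨hfirst, hsecond, halt⟩, hM₀⟩
    have hhead e (he : q.edges.head? = some e) : e ∈ M :=
      by_contra fun heM => hfirst.mp hM₀ ((hsecond e he).mpr heM)
    exact ⟨⟨hq, heven, halt, hhead⟩, hM₀, hfirst.mp hM₀, hw₁, hu⟩
  · rintro ⟨⟨hq, heven, halt, hhead⟩, hM₀, hM₁, hw₁, hu⟩
    refine ⟨⟨⟨hq, hw₁⟩, hu⟩, heven, ⟨iff_of_true hM₀ hM₁, fun e he => ?_, halt⟩, hM₀⟩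
    exact iff_of_false hM₁ (not_not.mpr (hhead e he))

namespace IsBalancedPath

theorem exists_mem_edges_mem_of_ne_end :
    ∀ {u v : V} {p : G.Walk u v}, IsBalancedPath M p →
      ∀ {w : V}, w ∈ p.support → w ≠ v → ∃ e ∈ p.edges, e ∈ M ∧ w ∈ e
  | _, _, .nil, _, _, hw, hwv => absurd (by simpa using hw) hwv
  | _, _, .cons _ .nil, hp, _, _, _ => absurd hp not_isBalancedPath_cons_nil
  | _, _, .cons _ (.cons _ q), hp, w, hw, hwv => by
    obtain ⟨hq, h₀, -⟩ := isBalancedPath_cons_cons_iff.mp hp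
    simp only [Walk.support_cons, List.mem_cons] at hw
    rcases hw with rfl | rfl | hw
    · exact ⟨_, by simp, h₀, Sym2.mem_mk_left _ _⟩
    · exact ⟨_, by simp, h₀, Sym2.mem_mk_right _ _⟩
    · obtain ⟨e, he, heM, hwe⟩ := hq.exists_mem_edges_mem_of_ne_end hw hwv
      exact ⟨e, by simp [he], heM, hwe⟩

theorem exists_mem_edges_notMem_of_ne_start :
    ∀ {u v : V} {p : G.Walk u v}, IsBalancedPath M p →
      ∀ {w : V}, w ∈ p.support → w ≠ u → ∃ e ∈ p.edges, e ∉ M ∧ w ∈ e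
  | _, _, .nil, _, _, hw, hwu => absurd (by simpa using hw) hwu
  | _, _, .cons _ .nil, hp, _, _, _ => absurd hp not_isBalancedPath_cons_nil
  | _, _, .cons _ (.cons (v := w₂) _ q), hp, w, hw, hwu => by
    obtain ⟨hq, -, h₁, -⟩ := isBalancedPath_cons_cons_iff.mp hp
    simp only [Walk.support_cons, List.mem_cons] at hw
    rcases hw with rfl | rfl | hw
    · exact absurd rfl hwu
    · exact ⟨_, by simp, h₁, Sym2.mem_mk_left _ _⟩
    · by_cases hw₂ : w = w₂
      · subst hw₂
        exact ⟨_, by simp, h₁, by simp⟩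
      · obtain ⟨e, he, heM, hwe⟩ := hq.exists_mem_edges_notMem_of_ne_start hw hw₂
        exact ⟨e, by simp [he], heM, hwe⟩

end IsBalancedPath

theorem IsBalancedPath.symmDiff_edges (hM : IsMatchingSet G M) :
    ∀ {u v : V} {p : G.Walk u v}, IsBalancedPath M p → ExposedBy M v →
      IsMatchingSet G (symmDiff M {e | e ∈ p.edges}) ∧
        (symmDiff M {e | e ∈ p.edges}).encard = M.encard ∧
        ExposedBy (symmDiff M {e | e ∈ p.edges}) u
  | _, _, .nil, _, hv => by
    rw [symmDiff_eq_left.mpr (by ext; simp)]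
    exact ⟨hM, rfl, hv⟩
  | _, _, .cons _ .nil, hp, _ => absurd hp not_isBalancedPath_cons_nil
  | u, _, .cons (v := w₁) h₁ (.cons (v := w₂) h₂ q), hp, hv => by
    obtain ⟨hq, h₀M, h₁M, hw₁, hu⟩ := isBalancedPath_cons_cons_iff.mp hp
    obtain ⟨hqM, hqcard, hqw₂⟩ := hq.symmDiff_edges hM hv
    have hedges : {e | e ∈ (Walk.cons h₁ (Walk.cons h₂ q)).edges} =
        insert s(u, w₁) (insert s(w₁, w₂) {e | e ∈ q.edges}) := by
      ext; simp
    have hu₀ : s(u, w₁) ∉ q.edges := fun h =>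
      hu (List.mem_cons_of_mem _ (Walk.mem_support_of_mem_edges h (Sym2.mem_mk_left u w₁)))
    have hw₁₂ : s(w₁, w₂) ∉ q.edges := fun h =>
      hw₁ (Walk.mem_support_of_mem_edges h (Sym2.mem_mk_left _ _))
    rw [hedges, symmDiff_insert_insert h₀M h₁M hu₀ hw₁₂, Sym2.eq_swap]
    have h₀' : s(u, w₁) ∈ symmDiff M {e | e ∈ q.edges} := Or.inl ⟨h₀M, hu₀⟩
    obtain ⟨hmatch, hcard⟩ := hqM.exchange h₀' (Sym2.mem_mk_right u w₁) h₂.symm hqw₂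
    refine ⟨hmatch, hcard.trans hqcard, ?_⟩
    rintro e (rfl | he) hue
    · rcases Sym2.mem_iff.mp hue with rfl | rfl <;> simp at hu
    · exact hqM.exposedBy_diff_singleton h₀' (Sym2.mem_mk_left u w₁) e he hue

theorem IsBalancedPath.cons_cons (hM : IsMatchingSet G M) {u x y v : V} {p : G.Walk y v}
    (hp : IsBalancedPath M p) (hv : ExposedBy M v) (hux : G.Adj u x) (hxy : G.Adj x y)
    (huxM : s(u, x) ∈ M) (hxyM : s(x, y) ∉ M) (hup : u ∉ p.support) :
    IsBalancedPath M (.cons hux (.cons hxy p)) := by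
  have hxp : x ∉ p.support := fun h => by
    have hxv : x ≠ v := fun hxv => hv _ huxM (hxv ▸ Sym2.mem_mk_right u x)
    obtain ⟨e, he, heM, hxe⟩ := hp.exists_mem_edges_mem_of_ne_end h hxv
    rw [hM.2 x e heM _ huxM hxe (Sym2.mem_mk_right u x)] at he
    exact hup (Walk.mem_support_of_mem_edges he (Sym2.mem_mk_left u x))
  exact isBalancedPath_cons_cons_iff.mpr ⟨hp, huxM, hxyM, hxp, by simp [hux.ne, hup]⟩

theorem IsMatchingSet.exists_isBalancedPath_of_exposedBy [Finite V] (hM : IsMatchingSet G M)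
    {N : Set (Sym2 V)} (hN : IsMaximumMatchingSet G N) {u : V} (hu : ExposedBy N u) :
    ∃ v, ExposedBy M v ∧
      ∃ p : G.Walk u v, IsBalancedPath M p ∧ ∀ e ∈ p.edges, e ∉ M → e ∈ N := by
  induction hn : (N \ M).ncard using Nat.strong_induction_on generalizing N u with
  | _ n ih =>
  by_cases huM : ExposedBy M u
  · exact ⟨u, huM, .nil, isBalancedPath_nil, by simp⟩
  obtain ⟨_, huxM, hue⟩ : ∃ e ∈ M, u ∈ e := by simpa [ExposedBy] using huM
  obtain ⟨x, rfl⟩ := Sym2.mem_iff_exists.mp hue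
  have hux : G.Adj u x := hM.1 huxM
  obtain ⟨_, hxyN, hxf⟩ : ∃ f ∈ N, x ∈ f := by
    simpa [ExposedBy] using hN.not_exposedBy_of_adj hux hu
  obtain ⟨y, rfl⟩ := Sym2.mem_iff_exists.mp hxf
  have hxy : G.Adj x y := hN.1.1 hxyN
  have huy : u ≠ y := fun h => hu _ hxyN (h ▸ Sym2.mem_mk_right x y)
  have hxyM : s(x, y) ∉ M := fun h => hu _ hxyN <|
    hM.2 x _ huxM _ h (Sym2.mem_mk_right u x) (Sym2.mem_mk_left x y) ▸ Sym2.mem_mk_left u x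
  obtain ⟨hN'match, hN'card⟩ := hN.1.exchange hxyN (Sym2.mem_mk_left x y) hux hu
  set N' := insert s(u, x) (N \ {s(x, y)})
  have hN'y : ExposedBy N' y := by
    rintro e (rfl | he) hye
    · rcases Sym2.mem_iff.mp hye with rfl | rfl
      exacts [huy rfl, hxy.ne rfl]
    · exact hN.1.exposedBy_diff_singleton hxyN (Sym2.mem_mk_right x y) e he hye
  have hN'N : N' \ M ⊆ N := by
    rintro e ⟨rfl | he, heM⟩
    exacts [absurd huxM heM, he.1]
  have hlt : (N' \ M).ncard < n := by
    refine hn ▸ Set.ncard_lt_ncard (LE.le.ssubset_of_mem_notMem ?_ ⟨hxyN, hxyM⟩ ?_)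
    · exact fun e he => ⟨hN'N he, he.2⟩
    · rintro ⟨h | ⟨-, hne⟩, -⟩
      exacts [hxyM (h ▸ huxM), hne rfl]
  obtain ⟨v, hv, p, hp, hpN'⟩ := ih _ hlt (hN.of_encard_eq hN'match hN'card) hN'y rfl
  have hpN : ∀ e ∈ p.edges, e ∉ M → e ∈ N := fun e he heM => hN'N ⟨hpN' e he heM, heM⟩
  have hup : u ∉ p.support := fun h => by
    obtain ⟨e, he, heM, hue⟩ := hp.exists_mem_edges_notMem_of_ne_start h huy
    exact hu e (hpN e he heM) hue
  refine ⟨v, hv, _, hp.cons_cons hM hv hux hxy huxM hxyM hup, ?_⟩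
  simp only [Walk.edges_cons, List.mem_cons]
  rintro e (rfl | rfl | he) heM
  exacts [absurd huxM heM, hxyN, hpN e he heM]

end BalancedPath

theorem stmt0 [Finite V] (G : SimpleGraph V) (M : Set (Sym2 V))
    (hM : IsMaximumMatchingSet G M) (u : V) :
    u ∈ Dset G ↔
      ∃ v : V, ExposedBy M v ∧ ∃ p : G.Walk u v, IsBalancedPath M p := by
  constructor
  · rintro ⟨N, hN, hu⟩
    obtain ⟨v, hv, p, hp, -⟩ := hM.1.exists_isBalancedPath_of_exposedBy hN hu
    exact ⟨v, hv, p, hp⟩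
  · rintro ⟨v, hv, p, hp⟩
    obtain ⟨hmatch, hcard, hu⟩ := hp.symmDiff_edges hM.1 hv
    exact ⟨_, hM.of_encard_eq hmatch hcard, hu⟩
end

section
/- Let G be a factorizable graph with perfect matching M, and x ∈ V(G). Then a vertex u lies in D(G−x) if and only if there is an M-saturated path between x and u (an odd-length M-alternating path whose edges in M form a perfect matching of the path). -/
open SimpleGraph

variable {V : Type*}

/-!
If `p` is an `M`-saturated path from `x` to `u`, then `M ∆ E(p)` is a matching of `G` covering
every vertex but `x` and `u`. In `G - x`, which has an odd number of vertices, it misses only `u`,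
so it is maximum. Conversely, `G - x` has a matching missing a single vertex (`M` minus its edge at
`x`), so a maximum matching of `G - x` missing `u` misses nothing else: it is a matching `N` of `G`
covering all vertices but `x` and `u`. Following `M`- and `N`-edges alternately from `x` never
revisits a vertex, and can only get stuck at `u`; the walk traced is the `M`-saturated path.
-/

open Set
open scoped symmDiff

def coveredVertices (N : Set (Sym2 V)) : Set V := {v | ∃ e ∈ N, v ∈ e}

lemma coveredVertices_insert (a b : V) (N : Set (Sym2 V)) :
    coveredVertices (insert s(a, b) N) = insert a (insert b (coveredVertices N)) := by
  ext v
  simp [coveredVertices, or_assoc]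

lemma exposedBy_iff {N : Set (Sym2 V)} {v : V} : ExposedBy N v ↔ v ∉ coveredVertices N := by
  simp [ExposedBy, coveredVertices]

lemma ncard_compl_singleton_add_one {α : Type*} [Finite α] (a : α) :
    ({a}ᶜ : Set α).ncard + 1 = Nat.card α := by
  rw [← ncard_singleton a, ncard_compl_add_ncard]

lemma Set.symmDiff_insert_insert {α : Type*} {A E : Set α} {x y : α} (hx : x ∈ A)
    (hy : y ∉ A) (hxE : x ∉ E) (hyE : y ∉ E) :
    A ∆ insert x (insert y E) = insert y ((A ∆ E) \ {x}) := by
  have hxy : x ≠ y := ne_of_mem_of_not_mem hx hy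
  ext z
  by_cases hzx : z = x <;> by_cases hzy : z = y <;> simp_all [mem_symmDiff]

section Matchings

variable {G : SimpleGraph V} {M N N₀ : Set (Sym2 V)}

namespace IsMatchingSet

lemma mono (hN : IsMatchingSet G N) {N' : Set (Sym2 V)} (h : N' ⊆ N) : IsMatchingSet G N' :=
  ⟨h.trans hN.1, fun v e he f hf => hN.2 v e (h he) f (h hf)⟩

lemma adj (hN : IsMatchingSet G N) {a b : V} (h : s(a, b) ∈ N) : G.Adj a b := hN.1 h

lemma eq_of_mem (hN : IsMatchingSet G N) {v w w' : V} (h : s(v, w) ∈ N) (h' : s(v, w') ∈ N) :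
    w = w' :=
  Sym2.congr_right.mp (hN.2 v _ h _ h' (by simp) (by simp))

lemma insert (hN : IsMatchingSet G N) {a b : V} (hab : G.Adj a b)
    (ha : a ∉ coveredVertices N) (hb : b ∉ coveredVertices N) :
    IsMatchingSet G (insert s(a, b) N) := by
  refine ⟨Set.insert_subset hab hN.1, ?_⟩
  have key : ∀ v, ∀ f ∈ N, v ∈ s(a, b) → v ∉ f := by
    rintro v f hf hv hvf
    rcases Sym2.mem_iff.mp hv with rfl | rfl
    exacts [ha ⟨f, hf, hvf⟩, hb ⟨f, hf, hvf⟩]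
  rintro v e (rfl | he) f (rfl | hf) hve hvf
  · rfl
  · exact absurd hvf (key v f hf hve)
  · exact absurd hve (key v e he hvf)
  · exact hN.2 v e he f hf hve hvf

lemma coveredVertices_diff_singleton (hN : IsMatchingSet G N) {a b : V} (hab : s(a, b) ∈ N) :
    coveredVertices (N \ {s(a, b)}) = coveredVertices N \ {a, b} := by
  ext v
  simp only [coveredVertices, mem_ofPred_eq, mem_sdiff, mem_singleton_iff, mem_insert_iff]
  constructor
  · rintro ⟨f, ⟨hf, hfab⟩, hvf⟩
    refine ⟨⟨f, hf, hvf⟩, ?_⟩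
    rintro (rfl | rfl) <;> exact hfab (hN.2 _ f hf _ hab hvf (by simp))
  · rintro ⟨⟨f, hf, hvf⟩, hv⟩
    refine ⟨f, ⟨hf, ?_⟩, hvf⟩
    rintro rfl
    exact hv (Sym2.mem_iff.mp hvf)

lemma ncard_coveredVertices [Finite V] (hN : IsMatchingSet G N) :
    (coveredVertices N).ncard = 2 * N.ncard := by
  induction N, N.toFinite using Set.Finite.induction_on with
  | empty => simp [coveredVertices]
  | @insert e N he _ ih =>
    induction e using Sym2.ind with
    | _ a b =>
    have hN' := hN.mono (subset_insert _ _)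
    have hab : a ≠ b := (hN.1 (mem_insert _ _)).ne
    have hnot : ∀ v ∈ s(a, b), v ∉ coveredVertices N := by
      rintro v hv ⟨f, hf, hvf⟩
      exact he (hN.2 v _ (mem_insert _ _) f (mem_insert_of_mem _ hf) hv hvf ▸ hf)
    rw [coveredVertices_insert, ncard_insert_of_notMem (by simpa [hab] using hnot a (by simp)),
      ncard_insert_of_notMem (hnot b (by simp)), ih hN', ncard_insert_of_notMem he]
    ring

lemma two_mul_ncard_le [Finite V] (hN : IsMatchingSet G N) : 2 * N.ncard ≤ Nat.card V := by
  rw [← hN.ncard_coveredVertices, ← ncard_univ]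
  exact ncard_le_ncard (subset_univ _)

lemma isMaximumMatchingSet_of_coveredVertices_eq [Finite V] (hN : IsMatchingSet G N)
    (hodd : Odd (Nat.card V)) {u : V} (hcov : coveredVertices N = {u}ᶜ) :
    IsMaximumMatchingSet G N := by
  refine ⟨hN, fun N' hN' => ?_⟩
  have h := hN.ncard_coveredVertices
  rw [hcov] at h
  have := ncard_compl_singleton_add_one u
  have := hN'.two_mul_ncard_le
  obtain ⟨k, hk⟩ := hodd
  omega

end IsMatchingSet

lemma IsMaximumMatchingSet.coveredVertices_eq [Finite V] (hmax : IsMaximumMatchingSet G N)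
    {u z : V} (hu : ExposedBy N u) (hN₀ : IsMatchingSet G N₀)
    (hcov₀ : coveredVertices N₀ = {z}ᶜ) : coveredVertices N = {u}ᶜ := by
  refine eq_of_subset_of_ncard_le (fun v hv => ?_) ?_
  · rintro rfl
    exact exposedBy_iff.mp hu hv
  have h₀ := hN₀.ncard_coveredVertices
  rw [hcov₀] at h₀
  rw [hmax.1.ncard_coveredVertices]
  have := ncard_compl_singleton_add_one u
  have := ncard_compl_singleton_add_one z
  have := hmax.2 N₀ hN₀
  omega

namespace IsPerfectMatchingSet

lemma isMatchingSet (hM : IsPerfectMatchingSet G M) : IsMatchingSet G M :=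
  ⟨hM.1, fun v _ he _ hf hve hvf => (hM.2 v).unique ⟨he, hve⟩ ⟨hf, hvf⟩⟩

lemma exists_mem (hM : IsPerfectMatchingSet G M) (v : V) : ∃ w, s(v, w) ∈ M := by
  obtain ⟨e, ⟨he, hve⟩, -⟩ := hM.2 v
  obtain ⟨w, rfl⟩ := Sym2.mem_iff_exists.mp hve
  exact ⟨w, he⟩

lemma coveredVertices_eq_univ (hM : IsPerfectMatchingSet G M) : coveredVertices M = univ :=
  eq_univ_of_forall fun v => let ⟨w, hw⟩ := hM.exists_mem v; ⟨_, hw, by simp⟩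

lemma even_card [Finite V] (hM : IsPerfectMatchingSet G M) : Even (Nat.card V) := by
  rw [← ncard_univ, ← hM.coveredVertices_eq_univ, hM.isMatchingSet.ncard_coveredVertices]
  exact even_two_mul _

lemma odd_card_compl_singleton [Finite V] (hM : IsPerfectMatchingSet G M) (x : V) :
    Odd (Nat.card ({x}ᶜ : Set V)) := by
  have h := hM.even_card
  rw [← ncard_compl_singleton_add_one x, Nat.even_add_one, Nat.not_even_iff_odd] at h
  rwa [Nat.card_coe_set_eq]

end IsPerfectMatchingSet

end Matchings

section Induce

variable {G : SimpleGraph V} {s : Set V}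

lemma IsMatchingSet.exists_induce {N : Set (Sym2 V)} (hN : IsMatchingSet G N)
    (hs : coveredVertices N ⊆ s) :
    ∃ N' : Set (Sym2 s), IsMatchingSet (G.induce s) N' ∧
      coveredVertices N' = Subtype.val ⁻¹' coveredVertices N := by
  refine ⟨Sym2.map Subtype.val ⁻¹' N, ⟨fun e he => ?_, fun v e he f hf hve hvf => ?_⟩,
    ?_⟩
  · induction e using Sym2.ind with
    | _ a b => simpa using hN.1 he
  · exact Sym2.map.injective Subtype.val_injective
      (hN.2 v _ he _ hf (Sym2.mem_map.mpr ⟨_, hve, rfl⟩) (Sym2.mem_map.mpr ⟨_, hvf, rfl⟩))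
  · ext w
    constructor
    · rintro ⟨e, he, hwe⟩
      exact ⟨_, he, Sym2.mem_map.mpr ⟨_, hwe, rfl⟩⟩
    · rintro ⟨e, he, hwe⟩
      obtain ⟨y, rfl⟩ := Sym2.mem_iff_exists.mp hwe
      have hy : y ∈ s := hs ⟨_, he, by simp⟩
      exact ⟨s(w, ⟨y, hy⟩), by simpa using he, by simp⟩

lemma IsMatchingSet.exists_of_induce {N' : Set (Sym2 s)} (hN' : IsMatchingSet (G.induce s) N') :
    ∃ N : Set (Sym2 V), IsMatchingSet G N ∧
      coveredVertices N = Subtype.val '' coveredVertices N' := by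
  refine ⟨Sym2.map Subtype.val '' N', ⟨?_, ?_⟩, ?_⟩
  · rintro _ ⟨e, he, rfl⟩
    induction e using Sym2.ind with
    | _ a b => simpa using hN'.1 he
  · rintro v _ ⟨e, he, rfl⟩ _ ⟨f, hf, rfl⟩ hve hvf
    obtain ⟨a, hae, rfl⟩ := Sym2.mem_map.mp hve
    obtain ⟨b, hbf, hba⟩ := Sym2.mem_map.mp hvf
    obtain rfl := Subtype.val_injective hba
    rw [hN'.2 b e he f hf hae hbf]
  · ext v
    constructor
    · rintro ⟨_, ⟨e, he, rfl⟩, hve⟩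
      obtain ⟨a, hae, rfl⟩ := Sym2.mem_map.mp hve
      exact ⟨a, ⟨e, he, hae⟩, rfl⟩
    · rintro ⟨a, ⟨e, he, hae⟩, rfl⟩
      exact ⟨_, ⟨e, he, rfl⟩, Sym2.mem_map.mpr ⟨_, hae, rfl⟩⟩

lemma preimage_val_compl_pair {x y : V} (hy : y ∈ ({x}ᶜ : Set V)) :
    (Subtype.val ⁻¹' ({x, y}ᶜ : Set V) : Set ({x}ᶜ : Set V)) = {⟨y, hy⟩}ᶜ := by
  ext ⟨w, hw⟩
  simp only [mem_preimage, mem_compl_iff, mem_insert_iff, mem_singleton_iff, Subtype.mk.injEq]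
  exact ⟨fun h => fun hwy => h (Or.inr hwy), fun h => (or_iff_right hw).not.mpr h⟩

lemma image_val_compl_singleton {x y : V} (hy : y ∈ ({x}ᶜ : Set V)) :
    Subtype.val '' ({⟨y, hy⟩}ᶜ : Set ({x}ᶜ : Set V)) = {x, y}ᶜ := by
  rw [← preimage_val_compl_pair hy, image_preimage_eq_inter_range, Subtype.range_coe,
    inter_eq_left, compl_subset_compl]
  exact singleton_subset_iff.mpr (mem_insert x {y})

lemma IsMatchingSet.exists_induce_compl_singleton {N : Set (Sym2 V)} (hN : IsMatchingSet G N)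
    {x y : V} (hcov : coveredVertices N = {x, y}ᶜ) (hy : y ∈ ({x}ᶜ : Set V)) :
    ∃ N' : Set (Sym2 ({x}ᶜ : Set V)), IsMatchingSet (G.induce {x}ᶜ) N' ∧
      coveredVertices N' = {⟨y, hy⟩}ᶜ := by
  rw [← preimage_val_compl_pair hy, ← hcov]
  refine hN.exists_induce (hcov ▸ compl_subset_compl.mpr ?_)
  exact singleton_subset_iff.mpr (mem_insert x {y})

lemma IsPerfectMatchingSet.exists_induce_compl_singleton {M : Set (Sym2 V)}
    (hM : IsPerfectMatchingSet G M) (x : V) :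
    ∃ (z : V) (hz : z ∈ ({x}ᶜ : Set V)) (N₀ : Set (Sym2 ({x}ᶜ : Set V))),
      IsMatchingSet (G.induce {x}ᶜ) N₀ ∧ coveredVertices N₀ = {⟨z, hz⟩}ᶜ := by
  have hM' := hM.isMatchingSet
  obtain ⟨z, hxz⟩ := hM.exists_mem x
  have hz : z ∈ ({x}ᶜ : Set V) := (hM'.adj hxz).ne.symm
  have hcov : coveredVertices (M \ {s(x, z)}) = {x, z}ᶜ := by
    rw [hM'.coveredVertices_diff_singleton hxz, hM.coveredVertices_eq_univ, compl_eq_univ_sdiff]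
  exact ⟨z, hz, (hM'.mono sdiff_subset).exists_induce_compl_singleton hcov hz⟩

end Induce

section SaturatedPaths

open Walk

variable {G : SimpleGraph V} {M : Set (Sym2 V)}

lemma isAltWalk_cons_iff {a b c : V} (h : G.Adj a b) (p : G.Walk b c) :
    IsAltWalk M (cons h p) ↔
      (∀ e ∈ p.edges.head?, (s(a, b) ∈ M ↔ e ∉ M)) ∧ IsAltWalk M p := by
  simp only [IsAltWalk, edges_cons]
  exact List.isChain_cons

lemma isSaturatedPath_cons_nil_iff {a b : V} (h : G.Adj a b) :
    IsSaturatedPath M (cons h nil) ↔ s(a, b) ∈ M := by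
  have hnil : IsAltWalk M (nil : G.Walk b b) := List.isChain_nil
  simp [IsSaturatedPath, isAltWalk_cons_iff, h.ne, hnil]

lemma isSaturatedPath_cons_cons_iff {a c d b : V} (h₁ : G.Adj a c) (h₂ : G.Adj c d)
    (q : G.Walk d b) :
    IsSaturatedPath M (cons h₁ (cons h₂ q)) ↔ IsSaturatedPath M q ∧ s(a, c) ∈ M ∧
      s(c, d) ∉ M ∧ a ≠ c ∧ a ∉ q.support ∧ c ∉ q.support := by
  simp only [IsSaturatedPath, cons_isPath_iff, support_cons, List.mem_cons, length_cons,
    Nat.odd_add_one, not_not, isAltWalk_cons_iff, edges_cons, List.head?_cons,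
    Option.mem_def, Option.some.injEq, forall_eq']
  constructor
  · rintro ⟨⟨⟨hq, hc⟩, ha⟩, hodd, ⟨hac_cd, hcd_head, hqalt⟩, hac⟩
    have hcd := hac_cd.mp hac
    exact ⟨⟨hq, hodd, hqalt, fun e he => by simpa [hcd] using hcd_head e he⟩, hac, hcd,
      fun h => ha (.inl h), fun h => ha (.inr h), hc⟩
  · rintro ⟨⟨hq, hodd, hqalt, hhead⟩, hac, hcd, hne, ha, hc⟩
    exact ⟨⟨⟨hq, hc⟩, by tauto⟩, hodd,
      ⟨iff_of_true hac hcd, fun e he => iff_of_false hcd (not_not.mpr (hhead e he)), hqalt⟩,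
      hac⟩

lemma IsSaturatedPath.ne {a b : V} {p : G.Walk a b} (hp : IsSaturatedPath M p) : a ≠ b := by
  rintro rfl
  have hodd := hp.2.1
  rw [length_eq_zero_iff.mpr (isPath_iff_nil.mp hp.1)] at hodd
  exact Nat.not_odd_zero hodd

theorem IsSaturatedPath.symmDiff_edgeSet (hM : IsPerfectMatchingSet G M) :
    ∀ {a b : V} {p : G.Walk a b}, IsSaturatedPath M p →
      IsMatchingSet G (M ∆ p.edgeSet) ∧ coveredVertices (M ∆ p.edgeSet) = {a, b}ᶜ
  | _, _, .nil, hp => absurd hp.2.1 (by simp)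
  | a, b, .cons h .nil, hp => by
    rw [isSaturatedPath_cons_nil_iff] at hp
    rw [edgeSet_cons, edgeSet_nil, insert_empty_eq,
      symmDiff_of_ge (singleton_subset_iff.mpr hp),
      hM.isMatchingSet.coveredVertices_diff_singleton hp, hM.coveredVertices_eq_univ]
    exact ⟨hM.isMatchingSet.mono sdiff_subset, (compl_eq_univ_sdiff _).symm⟩
  | a, b, .cons (v := c) h₁ (.cons (v := d) h₂ q), hp => by
    obtain ⟨hq, hac, hcd, hne, haq, hcq⟩ := (isSaturatedPath_cons_cons_iff h₁ h₂ q).mp hp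
    obtain ⟨hNq, hcovq⟩ := IsSaturatedPath.symmDiff_edgeSet hM hq
    have hacq : s(a, c) ∉ q.edgeSet := fun h => haq (q.fst_mem_support_of_mem_edges h)
    have hcdq : s(c, d) ∉ q.edgeSet := fun h => hcq (q.fst_mem_support_of_mem_edges h)
    have hcov := hNq.coveredVertices_diff_singleton (Or.inl ⟨hac, hacq⟩)
    rw [hcovq] at hcov
    rw [edgeSet_cons, edgeSet_cons, Set.symmDiff_insert_insert hac hcd hacq hcdq]
    refine ⟨(hNq.mono sdiff_subset).insert h₂ (by simp [hcov]) (by simp [hcov]), ?_⟩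
    have had : a ≠ d := fun h => haq (h ▸ q.start_mem_support)
    have hab : a ≠ b := fun h => haq (h ▸ q.end_mem_support)
    have hcb : c ≠ b := fun h => hcq (h ▸ q.end_mem_support)
    have hdb := hq.ne
    rw [coveredVertices_insert, hcov]
    ext v
    simp only [mem_insert_iff, mem_sdiff, mem_compl_iff, mem_singleton_iff, not_or]
    constructor
    · rintro (rfl | rfl | h) <;> tauto
    · rintro ⟨hva, hvb⟩
      by_cases hvc : v = c <;> by_cases hvd : v = d <;> tauto

end SaturatedPaths

section AlternatingSearch

variable {G : SimpleGraph V} {M N : Set (Sym2 V)}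

/-- `S` is the set of vertices visited so far by the search alternating between `M` and `N`, and
`a` the last one: `S` is closed under `N`-partners and, except at `a`, under `M`-partners. -/
def IsVisitedSet (M N : Set (Sym2 V)) (S : Set V) (a : V) : Prop :=
  a ∈ S ∧ (∀ s ∈ S, ∀ t, s(s, t) ∈ M → t ∈ S ∨ s = a) ∧
    ∀ s ∈ S, ∀ t, s(s, t) ∈ N → t ∈ S

lemma isVisitedSet_singleton {x : V} (hx : x ∉ coveredVertices N) : IsVisitedSet M N {x} x :=
  ⟨rfl, fun _ hs _ _ => .inr hs,
    fun s hs t ht => absurd ⟨_, ht, by simp⟩ (mem_singleton_iff.mp hs ▸ hx)⟩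

lemma IsVisitedSet.insert_insert {S : Set V} {a : V} (hM : IsMatchingSet G M)
    (hN : IsMatchingSet G N) (hS : IsVisitedSet M N S a) {v w : V} (hav : s(a, v) ∈ M)
    (hvw : s(v, w) ∈ N) :
    IsVisitedSet M N (insert v (insert w S)) w := by
  obtain ⟨haS, hMS, hNS⟩ := hS
  refine ⟨by simp, ?_, ?_⟩
  · rintro s (rfl | rfl | hs) t ht
    · exact .inl (by simp [hM.eq_of_mem ht (Sym2.eq_swap ▸ hav), haS])
    · exact .inr rfl
    · rcases hMS s hs t ht with htS | rfl
      · exact .inl (by simp [htS])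
      · exact .inl (by simp [hM.eq_of_mem ht hav])
  · rintro s (rfl | rfl | hs) t ht
    · simp [hN.eq_of_mem ht hvw]
    · simp [hN.eq_of_mem ht (Sym2.eq_swap ▸ hvw)]
    · simp [hNS s hs t ht]

theorem IsVisitedSet.exists_isSaturatedPath [Finite V] (hM : IsPerfectMatchingSet G M)
    (hN : IsMatchingSet G N) {S : Set V} {a : V} (hS : IsVisitedSet M N S a) {u v : V}
    (hvS : v ∉ S) (hav : s(a, v) ∈ M) (hcov : ∀ t ∉ S, t = u ∨ t ∈ coveredVertices N) :
    ∃ p : G.Walk a u, IsSaturatedPath M p ∧ ∀ t ∈ p.support, t ∈ S → t = a := by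
  have hM' := hM.isMatchingSet
  rcases hcov v hvS with rfl | ⟨e, he, hve⟩
  · refine ⟨.cons (hM'.adj hav) .nil, (isSaturatedPath_cons_nil_iff _).mpr hav, ?_⟩
    intro t ht htS
    simp only [Walk.support_cons, Walk.support_nil, List.mem_cons, List.not_mem_nil,
      or_false] at ht
    rcases ht with rfl | rfl
    exacts [rfl, absurd htS hvS]
  obtain ⟨w, rfl⟩ := Sym2.mem_iff_exists.mp hve
  obtain ⟨z, hwz⟩ := hM.exists_mem w
  have hvw : G.Adj v w := hN.adj he
  have hwS : w ∉ S := fun hw => hvS (hS.2.2 w hw v (Sym2.eq_swap ▸ he))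
  have hvwM : s(v, w) ∉ M := fun h => hwS (hM'.eq_of_mem h (Sym2.eq_swap ▸ hav) ▸ hS.1)
  have hzS : z ∉ S := by
    intro hz
    rcases hS.2.1 z hz w (Sym2.eq_swap ▸ hwz) with hw | rfl
    · exact hwS hw
    · exact hvw.ne (hM'.eq_of_mem hav (Sym2.eq_swap ▸ hwz))
  have hzv : z ≠ v := by
    rintro rfl
    exact hwS (hM'.eq_of_mem (Sym2.eq_swap ▸ hwz) (Sym2.eq_swap ▸ hav) ▸ hS.1)
  have hvS' : v ∉ insert w S := by simp [hvS, hvw.ne]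
  -- the termination measure decreases (found by `termination_by` as an assumption)
  have hlt : (insert v (insert w S))ᶜ.ncard < Sᶜ.ncard := ncard_lt_ncard
    (compl_lt_compl_iff_lt.mpr ((subset_insert w S).trans_ssubset (ssubset_insert hvS')))
  obtain ⟨q, hq, hqS⟩ := IsVisitedSet.exists_isSaturatedPath hM hN
    (hS.insert_insert hM' hN hav he) (by simp [hzS, hzv, (hM'.adj hwz).ne.symm]) hwz
    (fun t ht => hcov t (by simp_all))
  refine ⟨.cons (hM'.adj hav) (.cons hvw q), (isSaturatedPath_cons_cons_iff _ _ q).mpr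
    ⟨hq, hav, hvwM, (hM'.adj hav).ne, fun ha => ?_, fun hv => ?_⟩, ?_⟩
  · exact hwS (hqS a ha (by simp [hS.1]) ▸ hS.1)
  · exact hvw.ne (hqS v hv (by simp))
  · intro t ht htS
    simp only [Walk.support_cons, List.mem_cons] at ht
    rcases ht with rfl | rfl | ht
    · rfl
    · exact absurd htS hvS
    · exact absurd (hqS t ht (by simp [htS]) ▸ htS) hwS
termination_by Sᶜ.ncard

end AlternatingSearch

theorem stmt2 [Finite V] (G : SimpleGraph V) (M : Set (Sym2 V))
    (hM : IsPerfectMatchingSet G M) (x u : V) (hu : u ∈ ({x}ᶜ : Set V)) :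
    (⟨u, hu⟩ : ({x}ᶜ : Set V)) ∈ Dset (G.induce ({x}ᶜ : Set V)) ↔
      ∃ p : G.Walk x u, IsSaturatedPath M p := by
  constructor
  · rintro ⟨N', hmax, hexp⟩
    obtain ⟨y, hy, N₀, hN₀, hcov₀⟩ := hM.exists_induce_compl_singleton x
    obtain ⟨N, hN, hcovN⟩ := hmax.1.exists_of_induce
    rw [hmax.coveredVertices_eq hexp hN₀ hcov₀, image_val_compl_singleton] at hcovN
    obtain ⟨z, hxz⟩ := hM.exists_mem x
    obtain ⟨p, hp, -⟩ := (isVisitedSet_singleton (by simp [hcovN])).exists_isSaturatedPath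
      (u := u) hM hN (v := z) (hM.isMatchingSet.adj hxz).ne.symm hxz fun t ht => by
        by_contra h
        simp_all
    exact ⟨p, hp⟩
  · rintro ⟨p, hp⟩
    obtain ⟨hN, hcovN⟩ := hp.symmDiff_edgeSet hM
    obtain ⟨N', hN', hcovN'⟩ := hN.exists_induce_compl_singleton hcovN hu
    exact ⟨N', hN'.isMaximumMatchingSet_of_coveredVertices_eq (hM.odd_card_compl_singleton x)
      hcovN', exposedBy_iff.mpr (by simp [hcovN'])⟩
end

section
/- Let G be a factorizable graph and X ⊆ V(G). Then X is separating if and only if for every perfect matching M of G, M contains a perfect matching of G[X] (equivalently, every matching edge with an endpoint in X has both endpoints in X). -/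
open SimpleGraph

variable {V : Type*}

/-!
Factor-connected components are the connected components of the graph of allowed edges, so
`X` is a union of them exactly when no allowed edge leaves `X`.
-/

theorem SimpleGraph.Reachable.mem_iff_of_adj {G : SimpleGraph V} {X : Set V}
    (hX : ∀ u v, G.Adj u v → u ∈ X → v ∈ X) {u v : V} (h : G.Reachable u v) :
    u ∈ X ↔ v ∈ X := by
  rw [reachable_iff_reflTransGen] at h
  induction h with
  | refl => rfl
  | tail _ hadj ih => exact ih.trans ⟨hX _ _ hadj, hX _ _ hadj.symm⟩

theorem allowedEdges_subset_edgeSet (G : SimpleGraph V) : allowedEdges G ⊆ G.edgeSet :=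
  fun _ ⟨_, hM, he⟩ => hM.1 he

theorem sameFC_of_mk_mem_allowedEdges {G : SimpleGraph V} {a b : V}
    (h : s(a, b) ∈ allowedEdges G) : SameFC G a b :=
  ((fromEdgeSet_adj _).2 ⟨h, G.ne_of_adj (allowedEdges_subset_edgeSet G h)⟩).reachable

theorem isSeparating_iff_forall_allowedEdges (G : SimpleGraph V) (X : Set V) :
    IsSeparating G X ↔ ∀ a b : V, s(a, b) ∈ allowedEdges G → a ∈ X → b ∈ X := by
  constructor
  · intro hX a b hab
    exact (hX a b (sameFC_of_mk_mem_allowedEdges hab)).1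
  · intro hX u v huv
    exact huv.mem_iff_of_adj fun a b hab => hX a b ((fromEdgeSet_adj _).1 hab).1

theorem stmt5_general (G : SimpleGraph V) (X : Set V) :
    IsSeparating G X ↔
      ∀ M, IsPerfectMatchingSet G M →
        ∀ e ∈ M, ∀ a b : V, e = s(a, b) → a ∈ X → b ∈ X := by
  rw [isSeparating_iff_forall_allowedEdges]
  constructor
  · rintro hX M hM _ he a b rfl
    exact hX a b ⟨M, hM, he⟩
  · rintro hX a b ⟨M, hM, he⟩
    exact hX M hM _ he a b rfl

theorem stmt5 [Finite V] (G : SimpleGraph V) (hG : Factorizable G) (X : Set V) :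
    IsSeparating G X ↔
      ∀ M, IsPerfectMatchingSet G M →
        ∀ e ∈ M, ∀ a b : V, e = s(a, b) → a ∈ X → b ∈ X :=
  stmt5_general G X
end

section
/- Let G be a factorizable graph and H a factor-connected component of G. If u, v ∈ V(H) and G − u − v is not factorizable (or u = v), then H − u − v is not factorizable (or u = v); i.e., the partition of V(H) induced by the relation ∼_G restricted to H refines the partition induced by ∼_H. -/
open SimpleGraph

variable {V : Type*}

/-!
Every edge of a perfect matching of `G` is allowed, so no such edge leaves the factor-connected
component `H` of `u` and `v`. Hence a perfect matching of `G` restricts to one of `G - V(H)`, and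
gluing it to a perfect matching of `H - u - v` would give one of `G - u - v`.
-/

/-- `M` is a perfect matching of `G.induce s`, with its edges written in `V`. -/
def IsPerfectMatchingOn (G : SimpleGraph V) (s : Set V) (M : Set (Sym2 V)) : Prop :=
  M ⊆ G.edgeSet ∧ (∀ e ∈ M, ∀ x ∈ e, x ∈ s) ∧ ∀ v ∈ s, ∃! e, e ∈ M ∧ v ∈ e

lemma map_val_mem_edgeSet_iff {G : SimpleGraph V} {s : Set V} {e : Sym2 s} :
    Sym2.map Subtype.val e ∈ G.edgeSet ↔ e ∈ (G.induce s).edgeSet :=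
  (Embedding.induce s).map_mem_edgeSet_iff

lemma mem_map_val_iff {s : Set V} {e : Sym2 s} {v : s} :
    (v : V) ∈ Sym2.map Subtype.val e ↔ v ∈ e := by
  refine ⟨fun h => ?_, fun h => Sym2.mem_map.2 ⟨v, h, rfl⟩⟩
  obtain ⟨w, hw, hwv⟩ := Sym2.mem_map.1 h
  exact Subtype.ext hwv ▸ hw

lemma IsPerfectMatchingSet.isPerfectMatchingOn_image_val {G : SimpleGraph V} {s : Set V}
    {N : Set (Sym2 s)} (hN : IsPerfectMatchingSet (G.induce s) N) :
    IsPerfectMatchingOn G s (Sym2.map Subtype.val '' N) := by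
  refine ⟨?_, ?_, fun v hv => ?_⟩
  · rintro _ ⟨f, hf, rfl⟩
    exact map_val_mem_edgeSet_iff.2 (hN.1 hf)
  · rintro _ ⟨f, -, rfl⟩ x hx
    obtain ⟨y, -, rfl⟩ := Sym2.mem_map.1 hx
    exact y.2
  · obtain ⟨f, ⟨hfN, hvf⟩, hf⟩ := hN.2 ⟨v, hv⟩
    refine ⟨Sym2.map Subtype.val f, ⟨⟨f, hfN, rfl⟩, mem_map_val_iff.2 hvf⟩, ?_⟩
    rintro _ ⟨⟨g, hgN, rfl⟩, hvg⟩
    rw [hf g ⟨hgN, mem_map_val_iff.1 hvg⟩]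

lemma IsPerfectMatchingOn.isPerfectMatchingSet_preimage {G : SimpleGraph V} {s : Set V}
    {M : Set (Sym2 V)} (hM : IsPerfectMatchingOn G s M) :
    IsPerfectMatchingSet (G.induce s) (Sym2.map Subtype.val ⁻¹' M) := by
  refine ⟨fun f hf => map_val_mem_edgeSet_iff.1 (hM.1 hf), fun w => ?_⟩
  obtain ⟨e, ⟨heM, hwe⟩, he⟩ := hM.2.2 w w.2
  obtain ⟨z, rfl⟩ := Sym2.mem_iff_exists.1 hwe
  have hz : z ∈ s := hM.2.1 _ heM z (Sym2.mem_mk_right _ _)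
  refine ⟨s(w, ⟨z, hz⟩), ⟨heM, Sym2.mem_mk_left _ _⟩, fun g ⟨hgM, hwg⟩ => ?_⟩
  exact Sym2.map.injective Subtype.val_injective (he _ ⟨hgM, mem_map_val_iff.2 hwg⟩)

lemma factorizable_induce_iff {G : SimpleGraph V} {s : Set V} :
    Factorizable (G.induce s) ↔ ∃ M, IsPerfectMatchingOn G s M :=
  ⟨fun ⟨_, hN⟩ => ⟨_, hN.isPerfectMatchingOn_image_val⟩,
    fun ⟨_, hM⟩ => ⟨_, hM.isPerfectMatchingSet_preimage⟩⟩

lemma IsPerfectMatchingSet.isPerfectMatchingOn_of_closed {G : SimpleGraph V}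
    {M : Set (Sym2 V)} (hM : IsPerfectMatchingSet G M) {t : Set V}
    (ht : ∀ a b, s(a, b) ∈ M → a ∈ t → b ∈ t) :
    IsPerfectMatchingOn G t {e ∈ M | ∀ x ∈ e, x ∈ t} := by
  refine ⟨fun e he => hM.1 he.1, fun e he => he.2, fun v hv => ?_⟩
  obtain ⟨e, ⟨heM, hve⟩, he⟩ := hM.2 v
  obtain ⟨z, rfl⟩ := Sym2.mem_iff_exists.1 hve
  refine ⟨s(v, z), ⟨⟨heM, fun x hx => ?_⟩, hve⟩, fun f hf => he f ⟨hf.1.1, hf.2⟩⟩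
  rcases Sym2.mem_iff.1 hx with rfl | rfl
  exacts [hv, ht _ _ heM hv]

lemma IsPerfectMatchingOn.union {G : SimpleGraph V} {s t : Set V} {M N : Set (Sym2 V)}
    (hM : IsPerfectMatchingOn G s M) (hN : IsPerfectMatchingOn G t N) (hst : Disjoint s t) :
    IsPerfectMatchingOn G (s ∪ t) (M ∪ N) := by
  refine ⟨Set.union_subset hM.1 hN.1, ?_, ?_⟩
  · rintro e (he | he) x hx
    exacts [Or.inl (hM.2.1 e he x hx), Or.inr (hN.2.1 e he x hx)]
  · have hM_not : ∀ v ∈ t, ∀ e ∈ M, v ∉ e := fun v hv e he hve =>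
      hst.ne_of_mem (hM.2.1 e he v hve) hv rfl
    have hN_not : ∀ v ∈ s, ∀ e ∈ N, v ∉ e := fun v hv e he hve =>
      hst.ne_of_mem hv (hN.2.1 e he v hve) rfl
    rintro v (hv | hv)
    · obtain ⟨e, ⟨he, hve⟩, huniq⟩ := hM.2.2 v hv
      refine ⟨e, ⟨Or.inl he, hve⟩, fun f ⟨hf, hvf⟩ => hf.elim (huniq f ⟨·, hvf⟩) ?_⟩
      exact fun hfN => (hN_not v hv f hfN hvf).elim
    · obtain ⟨e, ⟨he, hve⟩, huniq⟩ := hN.2.2 v hv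
      refine ⟨e, ⟨Or.inr he, hve⟩, fun f ⟨hf, hvf⟩ => hf.elim ?_ (huniq f ⟨·, hvf⟩)⟩
      exact fun hfM => (hM_not v hv f hfM hvf).elim

lemma IsPerfectMatchingSet.sameFC_of_mem {G : SimpleGraph V} {M : Set (Sym2 V)}
    (hM : IsPerfectMatchingSet G M) {a b : V} (h : s(a, b) ∈ M) : SameFC G a b :=
  Adj.reachable ((fromEdgeSet_adj _).2 ⟨⟨M, hM, h⟩, (G.mem_edgeSet.1 (hM.1 h)).ne⟩)

lemma IsPerfectMatchingSet.isPerfectMatchingOn_compl_sameFC {G : SimpleGraph V}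
    {M : Set (Sym2 V)} (hM : IsPerfectMatchingSet G M) (u : V) :
    IsPerfectMatchingOn G {w | SameFC G u w}ᶜ {e ∈ M | ∀ x ∈ e, x ∈ {w | SameFC G u w}ᶜ} :=
  hM.isPerfectMatchingOn_of_closed fun _ _ hab ha hb => ha (hb.trans (hM.sameFC_of_mem hab).symm)

lemma Set.compl_eq_sdiff_union_compl {α : Type*} {s t : Set α} (h : t ⊆ s) :
    tᶜ = (s \ t) ∪ sᶜ := by
  rw [Set.sdiff_eq, Set.union_comm, Set.union_inter_distrib_left, Set.compl_union_self,
    Set.univ_inter, ← Set.compl_inter, Set.inter_eq_right.2 h]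

theorem stmt6_general (G : SimpleGraph V) (hG : Factorizable G) (u v : V)
    (hfc : SameFC G u v)
    (h : ¬ Factorizable (G.induce ({u, v}ᶜ : Set V))) :
    ¬ Factorizable (G.induce ({w | SameFC G u w} \ {u, v})) := by
  intro hH
  obtain ⟨M, hM⟩ := hG
  obtain ⟨N, hN⟩ := factorizable_induce_iff.1 hH
  have huv : ({u, v} : Set V) ⊆ {w | SameFC G u w} :=
    Set.insert_subset (Reachable.refl u) (Set.singleton_subset_iff.2 hfc)
  have hdisj : Disjoint ({w | SameFC G u w} \ {u, v}) {w | SameFC G u w}ᶜ :=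
    disjoint_compl_right_iff.2 Set.sdiff_subset
  apply h
  rw [factorizable_induce_iff, Set.compl_eq_sdiff_union_compl huv]
  exact ⟨_, hN.union (hM.isPerfectMatchingOn_compl_sameFC u) hdisj⟩

theorem stmt6 [Finite V] (G : SimpleGraph V) (hG : Factorizable G) (u v : V)
    (hfc : SameFC G u v) (hne : u ≠ v)
    (h : ¬ Factorizable (G.induce ({u, v}ᶜ : Set V))) :
    ¬ Factorizable (G.induce ({w | SameFC G u w} \ {u, v})) :=
  stmt6_general G hG u v hfc h
end

section
/- Every saturated factorizable graph is connected. -/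
open SimpleGraph

variable {V : Type*}

/-! If `x` and `y` lay in different components of a saturated graph `G`, some perfect
matching `N` of `G + xy` would not be one of `G`, so it would contain `xy`. The component `C`
of `x` is closed under a perfect matching of `G`, hence has even size; but `C ∪ {y}` is closed
under `N`, hence has even size too, although `y ∉ C`. -/

namespace IsPerfectMatchingSet

variable {G : SimpleGraph V} {M : Set (Sym2 V)}

theorem adj_of_mem (hM : IsPerfectMatchingSet G M) {u v : V} (h : s(u, v) ∈ M) : G.Adj u v :=
  hM.1 h

theorem eq_of_mem_of_mem (hM : IsPerfectMatchingSet G M) {v : V} {e f : Sym2 V}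
    (he : e ∈ M) (hve : v ∈ e) (hf : f ∈ M) (hvf : v ∈ f) : e = f :=
  (hM.2 v).unique ⟨he, hve⟩ ⟨hf, hvf⟩

/-- The edges of `M` inside `S` form a perfect matching of `S`. -/
theorem even_ncard_of_closed [Finite V] (hM : IsPerfectMatchingSet G M) {S : Set V}
    (hS : ∀ u v, s(u, v) ∈ M → u ∈ S → v ∈ S) : Even S.ncard := by
  rw [(IsClique.top (s := S)).even_iff_exists_isMatching S.toFinite]
  refine ⟨((⊤ : SimpleGraph V).toSubgraph (fromEdgeSet M) le_top).induce S, rfl, ?_⟩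
  intro v hv
  obtain ⟨e, ⟨heM, hve⟩, -⟩ := hM.2 v
  obtain ⟨w, rfl⟩ := Sym2.mem_iff_exists.mp hve
  refine ⟨w, ⟨hv, hS v w heM hv, heM, (hM.adj_of_mem heM).ne⟩, ?_⟩
  rintro w' ⟨-, -, hw'M, -⟩
  exact Sym2.congr_right.mp (hM.eq_of_mem_of_mem hw'M (Sym2.mem_mk_left v w') heM hve)

theorem mem_edgeSet_of_sup_edge {x y : V}
    (hM : IsPerfectMatchingSet (G ⊔ fromEdgeSet {s(x, y)}) M) {e : Sym2 V} (he : e ∈ M)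
    (hexy : e ≠ s(x, y)) : e ∈ G.edgeSet := by
  have := hM.1 he
  simp only [edgeSet_sup, edgeSet_fromEdgeSet, Set.mem_union, Set.mem_sdiff,
    Set.mem_singleton_iff] at this
  tauto

theorem of_sup_edge {x y : V} (hM : IsPerfectMatchingSet (G ⊔ fromEdgeSet {s(x, y)}) M)
    (hxy : s(x, y) ∉ M) : IsPerfectMatchingSet G M :=
  ⟨fun _ he => hM.mem_edgeSet_of_sup_edge he (ne_of_mem_of_not_mem he hxy), hM.2⟩

theorem reachable_of_sup_edge [Finite V] {N : Set (Sym2 V)} {x y : V}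
    (hM : IsPerfectMatchingSet G M) (hN : IsPerfectMatchingSet (G ⊔ fromEdgeSet {s(x, y)}) N)
    (hxyN : s(x, y) ∈ N) : G.Reachable x y := by
  by_contra hxy
  set C := {v | G.Reachable x v}
  have hC : Even C.ncard :=
    hM.even_ncard_of_closed fun u v huv hu => hu.trans (hM.adj_of_mem huv).reachable
  have hCy : Even (insert y C).ncard := by
    refine hN.even_ncard_of_closed fun u v huv hu => ?_
    by_cases he : s(u, v) = s(x, y)
    · rcases Sym2.mem_iff.mp (he ▸ Sym2.mem_mk_right u v : v ∈ s(x, y)) with rfl | rfl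
      · exact Or.inr (.refl v)
      · exact Or.inl rfl
    have hadj : G.Adj u v := hN.mem_edgeSet_of_sup_edge huv he
    rcases hu with rfl | hu
    · exact absurd (hN.eq_of_mem_of_mem huv (Sym2.mem_mk_left _ _) hxyN (Sym2.mem_mk_right _ _)) he
    · exact Or.inr (hu.trans hadj.reachable)
  rw [Set.even_card_insert_iff (show y ∉ C from hxy)] at hCy
  exact Nat.not_even_iff_odd.mpr hCy hC

end IsPerfectMatchingSet

theorem Saturated.exists_isPerfectMatchingSet_sup_edge [Finite V] {G : SimpleGraph V}
    (hG : Saturated G) {x y : V} (hne : x ≠ y) (hxy : ¬G.Adj x y) :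
    ∃ N, IsPerfectMatchingSet (G ⊔ fromEdgeSet {s(x, y)}) N ∧ s(x, y) ∈ N := by
  by_contra! h
  have hsub : {N | IsPerfectMatchingSet (G ⊔ fromEdgeSet {s(x, y)}) N} ⊆
      {N | IsPerfectMatchingSet G N} := fun N hN => hN.of_sup_edge (h N hN)
  exact (hG.2 x y hne hxy).not_ge (Set.ncard_le_ncard hsub)

theorem stmt12 [Finite V] [Nonempty V] (G : SimpleGraph V) (hG : Saturated G) :
    G.Connected := by
  obtain ⟨M, hM⟩ := hG.1
  rw [connected_iff]
  refine ⟨fun x y => ?_, ‹_›⟩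
  by_contra hxy
  obtain ⟨N, hN, hxyN⟩ :=
    hG.exists_isPerfectMatchingSet_sup_edge (by rintro rfl; exact hxy (.refl x))
      fun h => hxy h.reachable
  exact hxy (hM.reachable_of_sup_edge hN hxyN)
end
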